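/- In the DAG G' of the 4-hyperclique reduction, for every a ∈ A, b ∈ B, c ∈ C, the set of LCAs of (a,b)₃ and c₃ lying in layer V₂ is exactly {(a,b)₂, (b,c)₂, (c,a)₂} (restricted to those of these vertices that exist). More precisely, every common ancestor of (a,b)₃ and c₃ in V₂ is an LCA, and the common ancestors of (a,b)₃ and c₃ in V₂ are exactly (a,b)₂, (b,c)₂, and (c,a)₂. -/
import Mathlib


variable {V : Type*}

/-- Reflexive-transitive reachability along directed edges. -/
def Reach (E : V → V → Prop) : V → V → Prop := Relation.ReflTransGen E

/-- Set of (reflexive) ancestors of `u`. -/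
def Anc (E : V → V → Prop) (u : V) : Set V := {x | Reach E x u}

/-- `w` is a lowest common ancestor of `u` and `v`. -/
def IsLCA (E : V → V → Prop) (u v w : V) : Prop :=
  Reach E w u ∧ Reach E w v ∧
    ∀ y, y ≠ w → Reach E w y → ¬(Reach E y u ∧ Reach E y v)

/-- The set of LCAs of `u` and `v`. -/
def LCAset (E : V → V → Prop) (u v : V) : Set V := {w | IsLCA E u v w}

/-- The directed graph given by `E` is acyclic (reachability is antisymmetric). -/
def IsDAG (E : V → V → Prop) : Prop :=
  ∀ u v : V, Reach E u v → Reach E v u → u = v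

section Hyperclique

variable {α β γ υ : Type*}

/-- The vertex set of the reduction graph `G'`:
layer `V₁ = U`, layer `V₂ = (A×B) ⊔ (B×C) ⊔ (C×A)`, layer `V₃ = (A×B) ⊔ C`. -/
abbrev HCVert (α β γ υ : Type*) :=
  υ ⊕ ((α × β ⊕ (β × γ ⊕ γ × α)) ⊕ (α × β ⊕ γ))

/-- Edges of the reduction graph `G'`, given the hyperedge predicates of the
3-uniform 4-partite hypergraph `G` (`EABU a b u` means `{a,b,u}` is a hyperedge,
etc.). -/
def HCEdge (EABU : α → β → υ → Prop) (EBCU : β → γ → υ → Prop)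
    (ECAU : γ → α → υ → Prop) : HCVert α β γ υ → HCVert α β γ υ → Prop
  -- every vertex of V₁ to every vertex of V₃
  | .inl _, .inr (.inr _) => True
  -- u ∈ V₁ to a V₂ vertex iff the corresponding triple is NOT a hyperedge
  | .inl u, .inr (.inl (.inl (a, b))) => ¬ EABU a b u
  | .inl u, .inr (.inl (.inr (.inl (b, c)))) => ¬ EBCU b c u
  | .inl u, .inr (.inl (.inr (.inr (c, a)))) => ¬ ECAU c a u
  -- V₂ to V₃ whenever the labels are consistent
  | .inr (.inl (.inl (a, b))), .inr (.inr (.inl (a', b'))) => a = a' ∧ b = b'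
  | .inr (.inl (.inl _)), .inr (.inr (.inr _)) => True
  | .inr (.inl (.inr (.inl (b, _)))), .inr (.inr (.inl (_, b'))) => b = b'
  | .inr (.inl (.inr (.inl (_, c)))), .inr (.inr (.inr c')) => c = c'
  | .inr (.inl (.inr (.inr (_, a)))), .inr (.inr (.inl (a', _))) => a = a'
  | .inr (.inl (.inr (.inr (c, _)))), .inr (.inr (.inr c')) => c = c'
  | _, _ => False

lemma no_edge_from_V3 (EABU : α → β → υ → Prop) (EBCU : β → γ → υ → Prop)
    (ECAU : γ → α → υ → Prop) (z : α × β ⊕ γ) (y : HCVert α β γ υ) :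
    ¬ HCEdge EABU EBCU ECAU (.inr (.inr z)) y := by
  rcases z with ⟨a, b⟩ | c <;>
    rcases y with u | ((⟨_, _⟩ | (⟨_, _⟩ | ⟨_, _⟩)) | (⟨_, _⟩ | _)) <;> exact id

lemma reach_from_V3 {EABU : α → β → υ → Prop} {EBCU : β → γ → υ → Prop}
    {ECAU : γ → α → υ → Prop} {z : α × β ⊕ γ} {y : HCVert α β γ υ}
    (h : Reach (HCEdge EABU EBCU ECAU) (.inr (.inr z)) y) : y = .inr (.inr z) := by
  rcases Relation.ReflTransGen.cases_head h with rfl | ⟨c, hc, _⟩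
  · rfl
  · exact absurd hc (no_edge_from_V3 _ _ _ _ _)

lemma edge_from_V2 {EABU : α → β → υ → Prop} {EBCU : β → γ → υ → Prop}
    {ECAU : γ → α → υ → Prop} {w : α × β ⊕ (β × γ ⊕ γ × α)} {y : HCVert α β γ υ}
    (h : HCEdge EABU EBCU ECAU (.inr (.inl w)) y) : ∃ z, y = .inr (.inr z) := by
  rcases w with ⟨_, _⟩ | (⟨_, _⟩ | ⟨_, _⟩) <;>
    rcases y with u | ((⟨_, _⟩ | (⟨_, _⟩ | ⟨_, _⟩)) | (⟨_, _⟩ | _)) <;>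
    first | exact ⟨_, rfl⟩ | exact absurd h id

lemma reach_from_V2 {EABU : α → β → υ → Prop} {EBCU : β → γ → υ → Prop}
    {ECAU : γ → α → υ → Prop} {w : α × β ⊕ (β × γ ⊕ γ × α)} {y : HCVert α β γ υ}
    (h : Reach (HCEdge EABU EBCU ECAU) (.inr (.inl w)) y) :
    y = .inr (.inl w) ∨ HCEdge EABU EBCU ECAU (.inr (.inl w)) y := by
  rcases Relation.ReflTransGen.cases_head h with rfl | ⟨c, hc, hr⟩
  · exact Or.inl rfl
  · obtain ⟨z, rfl⟩ := edge_from_V2 hc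
    rw [reach_from_V3 hr]
    exact Or.inr hc

theorem stmt_15 [Fintype α] [Fintype β] [Fintype γ] [Fintype υ]
    (EABU : α → β → υ → Prop) (EBCU : β → γ → υ → Prop)
    (ECAU : γ → α → υ → Prop) :
    ∀ (a : α) (b : β) (c : γ),
      (∀ w₂ : α × β ⊕ (β × γ ⊕ γ × α),
        Reach (HCEdge EABU EBCU ECAU) (.inr (.inl w₂)) (.inr (.inr (.inl (a, b)))) →
        Reach (HCEdge EABU EBCU ECAU) (.inr (.inl w₂)) (.inr (.inr (.inr c))) →
        IsLCA (HCEdge EABU EBCU ECAU)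
          (.inr (.inr (.inl (a, b)))) (.inr (.inr (.inr c))) (.inr (.inl w₂))) ∧
      {w₂ : α × β ⊕ (β × γ ⊕ γ × α) |
        Reach (HCEdge EABU EBCU ECAU) (.inr (.inl w₂)) (.inr (.inr (.inl (a, b)))) ∧
        Reach (HCEdge EABU EBCU ECAU) (.inr (.inl w₂)) (.inr (.inr (.inr c)))} =
        {.inl (a, b), .inr (.inl (b, c)), .inr (.inr (c, a))} := by
  intro a b c
  constructor
  · intro w₂ h1 h2
    refine ⟨h1, h2, ?_⟩
    intro y hne hwy ⟨hy1, hy2⟩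
    rcases reach_from_V2 hwy with rfl | hedge
    · exact hne rfl
    · obtain ⟨z, rfl⟩ := edge_from_V2 hedge
      have e1 := reach_from_V3 hy1
      have e2 := reach_from_V3 hy2
      rw [← e1] at e2
      simp at e2
  · ext w
    simp only [Set.mem_setOf_eq, Set.mem_insert_iff, Set.mem_singleton_iff]
    constructor
    · rintro ⟨h1, h2⟩
      rcases reach_from_V2 h1 with h1' | h1'
      · simp at h1'
      rcases reach_from_V2 h2 with h2' | h2'
      · simp at h2'
      rcases w with ⟨a', b'⟩ | (⟨b', c'⟩ | ⟨c', a'⟩)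
      · obtain ⟨rfl, rfl⟩ := h1'
        exact Or.inl rfl
      · obtain rfl := h1'
        obtain rfl := h2'
        exact Or.inr (Or.inl rfl)
      · obtain rfl := h1'
        obtain rfl := h2'
        exact Or.inr (Or.inr rfl)
    · rintro (rfl | rfl | rfl)
      · exact ⟨Relation.ReflTransGen.single ⟨rfl, rfl⟩,
          Relation.ReflTransGen.single trivial⟩
      · exact ⟨Relation.ReflTransGen.single rfl, Relation.ReflTransGen.single rfl⟩
      · exact ⟨Relation.ReflTransGen.single rfl, Relation.ReflTransGen.single rfl⟩

end Hyperclique
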